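/- Plemelj-type jump identity in the upper/lower half-plane: for f : ℝ → ℂ continuous and integrable, define F(ζ) = (1/(2πj)) ∫_ℝ f(λ)/(λ − ζ) dλ for ζ ∉ ℝ. Then for fixed x ∈ ℝ at which f is Hölder continuous, lim_{ε→0⁺} [F(x + jε) − F(x − jε)] = f(x). -/

import Mathlib

/-!
The Cauchy kernels at `x + jε` and `x - jε` differ by the Poisson kernel of the half-plane,
`ε⁻¹ P(ε⁻¹ (x - t))` with `P(u) = π⁻¹ (1 + u²)⁻¹` the standard Cauchy density. Hence the jump
`F(x + jε) - F(x - jε)` is `f` integrated against an approximate identity, which tends to `f x`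
at every point of continuity of the integrable function `f`.
-/

open Complex Filter MeasureTheory Topology Bornology ProbabilityTheory

lemma tendsto_mul_inv_sq_add_one_atTop :
    Tendsto (fun r : ℝ => r * (r ^ 2 + 1)⁻¹) atTop (𝓝 0) := by
  refine squeeze_zero' ?_ ?_ tendsto_inv_atTop_zero
  · filter_upwards [eventually_ge_atTop 0] with r hr
    positivity
  · filter_upwards [eventually_gt_atTop 0] with r hr
    rw [← div_eq_mul_inv, div_le_iff₀ (by positivity), inv_mul_eq_div, le_div_iff₀ hr]
    nlinarith

lemma tendsto_norm_pow_finrank_mul_cauchyPDFReal_cobounded :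
    Tendsto (fun u : ℝ => ‖u‖ ^ Module.finrank ℝ ℝ * cauchyPDFReal 0 1 u) (cobounded ℝ)
      (𝓝 0) := by
  have h := (tendsto_mul_inv_sq_add_one_atTop.comp
    (tendsto_norm_cobounded_atTop (E := ℝ))).const_mul Real.pi⁻¹
  rw [mul_zero] at h
  refine h.congr fun u => ?_
  simp only [Function.comp_apply, Module.finrank_self, pow_one, cauchyPDFReal_def,
    NNReal.coe_one, sub_zero, one_pow, Real.norm_eq_abs, sq_abs]
  ring

lemma tendsto_integral_cauchyPDFReal_smul {E : Type*} [NormedAddCommGroup E]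
    [NormedSpace ℝ E] [CompleteSpace E] {g : ℝ → E} (hg : Integrable g) {x : ℝ}
    (hx : ContinuousAt g x) :
    Tendsto (fun ε : ℝ => ∫ t, (ε⁻¹ * cauchyPDFReal 0 1 (ε⁻¹ * (x - t))) • g t)
      (𝓝[>] 0) (𝓝 (g x)) := by
  have h := (tendsto_integral_comp_smul_smul_of_integrable' (μ := volume)
    (fun u => (cauchyPDF_pos 0 one_ne_zero u).le) (integral_cauchyPDFReal_eq_one 0 one_ne_zero)
    tendsto_norm_pow_finrank_mul_cauchyPDFReal_cobounded hg hx).comp tendsto_inv_nhdsGT_zero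
  simpa only [Function.comp_def, Module.finrank_self, pow_one, smul_eq_mul] using h

lemma norm_inv_ofReal_sub_le (t : ℝ) {ζ : ℂ} (hζ : ζ.im ≠ 0) :
    ‖((t : ℂ) - ζ)⁻¹‖ ≤ |ζ.im|⁻¹ := by
  rw [norm_inv]
  refine inv_anti₀ (abs_pos.2 hζ) ?_
  simpa using abs_im_le_norm ((t : ℂ) - ζ)

lemma MeasureTheory.Integrable.div_ofReal_sub {μ : Measure ℝ} {f : ℝ → ℂ} (hf : Integrable f μ)
    {ζ : ℂ} (hζ : ζ.im ≠ 0) :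
    Integrable (fun t : ℝ => f t / ((t : ℂ) - ζ)) μ := by
  have hmeas : AEStronglyMeasurable (fun t : ℝ => ((t : ℂ) - ζ)⁻¹) μ :=
    (measurable_ofReal.sub_const ζ).inv.aestronglyMeasurable
  simpa only [div_eq_mul_inv] using
    hf.mul_bdd hmeas (Eventually.of_forall fun t => norm_inv_ofReal_sub_le t hζ)

lemma cauchy_kernel_sub_conj_eq_cauchyPDFReal (t x ε : ℝ) :
    (2 * Real.pi * I)⁻¹ * (((t : ℂ) - (x + ε * I))⁻¹ - ((t : ℂ) - (x - ε * I))⁻¹)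
      = ((ε⁻¹ * cauchyPDFReal 0 1 (ε⁻¹ * (x - t)) : ℝ) : ℂ) := by
  rcases eq_or_ne ε 0 with rfl | hε
  · simp
  have hε' : (ε : ℂ) ≠ 0 := ofReal_ne_zero.2 hε
  have hprod : ((t : ℂ) - (x + ε * I)) * ((t : ℂ) - (x - ε * I)) = ((x - t) ^ 2 + ε ^ 2 : ℝ) := by
    push_cast
    linear_combination (-(ε : ℂ) ^ 2) * I_sq
  have hplus : (t : ℂ) - (x + ε * I) ≠ 0 := fun h => hε (by simpa using congrArg im h)
  have hminus : (t : ℂ) - (x - ε * I) ≠ 0 := fun h => hε (by simpa using congrArg im h)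
  rw [inv_sub_inv hplus hminus, hprod, cauchyPDFReal_def]
  push_cast
  field_simp
  ring

lemma cauchy_integral_sub_conj_eq_integral_cauchyPDFReal_smul {f : ℝ → ℂ} (hf : Integrable f)
    (x : ℝ) {ε : ℝ} (hε : ε ≠ 0) :
    ((2 * Real.pi * I)⁻¹ * ∫ t : ℝ, f t / ((t : ℂ) - (x + ε * I)))
        - (2 * Real.pi * I)⁻¹ * ∫ t : ℝ, f t / ((t : ℂ) - (x - ε * I))
      = ∫ t, (ε⁻¹ * cauchyPDFReal 0 1 (ε⁻¹ * (x - t))) • f t := by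
  rw [← mul_sub, ← integral_sub (hf.div_ofReal_sub (by simpa)) (hf.div_ofReal_sub (by simpa)),
    ← integral_const_mul]
  refine integral_congr_ae (Eventually.of_forall fun t => ?_)
  simp only [div_eq_mul_inv, ← mul_sub, real_smul]
  rw [← cauchy_kernel_sub_conj_eq_cauchyPDFReal]
  ring

theorem plemelj_jump_general (f : ℝ → ℂ) (hf_int : Integrable f) (hf_cont : Continuous f)
    (x : ℝ)
    (F : ℂ → ℂ)
    (hF : ∀ ζ : ℂ, ζ.im ≠ 0 →
      F ζ = (2 * Real.pi * I)⁻¹ * ∫ t : ℝ, f t / ((t : ℂ) - ζ)) :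
    Tendsto (fun ε : ℝ => F ((x : ℂ) + ε * I) - F ((x : ℂ) - ε * I))
      (nhdsWithin 0 (Set.Ioi 0)) (nhds (f x)) := by
  refine (tendsto_integral_cauchyPDFReal_smul hf_int hf_cont.continuousAt).congr' ?_
  filter_upwards [self_mem_nhdsWithin] with ε (hε : 0 < ε)
  rw [hF _ (by simp [hε.ne']), hF _ (by simp [hε.ne']),
    cauchy_integral_sub_conj_eq_integral_cauchyPDFReal_smul hf_int x hε.ne']

/-- Plemelj jump identity: for `f : ℝ → ℂ` continuous, integrable, and Hölder
continuous at `x`, the Cauchy transform `F(ζ) = (2πj)⁻¹ ∫ f(λ)/(λ − ζ) dλ` satisfies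
`lim_{ε→0⁺} (F(x + jε) − F(x − jε)) = f(x)`. -/
theorem plemelj_jump (f : ℝ → ℂ) (hf_int : Integrable f) (hf_cont : Continuous f)
    (x : ℝ)
    (hHolder : ∃ K α δ : ℝ, 0 < K ∧ 0 < α ∧ α ≤ 1 ∧ 0 < δ ∧
      ∀ t : ℝ, |t - x| < δ → ‖f t - f x‖ ≤ K * |t - x| ^ α)
    (F : ℂ → ℂ)
    (hF : ∀ ζ : ℂ, ζ.im ≠ 0 →
      F ζ = (2 * Real.pi * I)⁻¹ * ∫ t : ℝ, f t / ((t : ℂ) - ζ)) :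
    Tendsto (fun ε : ℝ => F ((x : ℂ) + ε * I) - F ((x : ℂ) - ε * I))
      (nhdsWithin 0 (Set.Ioi 0)) (nhds (f x)) :=
  plemelj_jump_general f hf_int hf_cont x F hF
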